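/- With the same setup, if ω is a 2-form on ℝ⁻ × V with i(∂r)ω = 0 = i(R)ω, then the pullback under a J-holomorphic map ũ satisfies ũ*ω = ω(π_ξ ũ_s, J(ũ) π_ξ ũ_s) ds ∧ dt. In particular, if ω(x, Jx) ≥ 0 for all x ∈ ξ, then ũ*ω is a nonnegative multiple of ds ∧ dt. -/

import Mathlib

/-! Split `ũ_s` along `ℝ ∂r ⊕ ℝ R ⊕ ξ`. Since `ω` kills `∂r` and `R` (in either slot, by
skew-symmetry) and `J` maps `ℝ ∂r ⊕ ℝ R` to itself, only the `ξ`-components of `ũ_s` and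
`ũ_t = J ũ_s` contribute to `ω(ũ_s, ũ_t)`. -/

section

variable {W : Type*} [AddCommGroup W] [Module ℝ W] (ω : W →ₗ[ℝ] W →ₗ[ℝ] ℝ) {a b : W}

theorem LinearMap.apply_eq_zero_of_skew_of_left (hanti : ∀ x y, ω x y = -ω y x)
    (ha : ∀ y, ω a y = 0) (x : W) : ω x a = 0 := by
  rw [hanti, ha, neg_zero]

theorem LinearMap.apply_smul_add_smul_add_of_left_eq_zero (ha : ∀ y, ω a y = 0)
    (hb : ∀ y, ω b y = 0) (s t : ℝ) (z y : W) : ω (s • a + t • b + z) y = ω z y := by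
  simp only [map_add, map_smul, LinearMap.add_apply, LinearMap.smul_apply, ha, hb, smul_zero,
    zero_add]

theorem LinearMap.apply_smul_add_smul_add_of_right_eq_zero (ha : ∀ x, ω x a = 0)
    (hb : ∀ x, ω x b = 0) (s t : ℝ) (x z : W) : ω x (s • a + t • b + z) = ω x z :=
  ω.flip.apply_smul_add_smul_add_of_left_eq_zero ha hb s t z x

end

theorem stmt6_general (W : Type*) [AddCommGroup W] [Module ℝ W]
    (dr R : W) (ξ : Submodule ℝ W) (J : W →ₗ[ℝ] W)
    (σ lam : W →ₗ[ℝ] ℝ) (πξ : W →ₗ[ℝ] W)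
    (ω : W →ₗ[ℝ] W →ₗ[ℝ] ℝ)
    (hdecomp : ∀ x, x = σ x • dr + lam x • R + πξ x) (hπmem : ∀ x, πξ x ∈ ξ)
    (hJdr : J dr = R) (hJR : J R = -dr)
    (hanti : ∀ x y, ω x y = - ω y x)
    (hωdr : ∀ y, ω dr y = 0) (hωR : ∀ y, ω R y = 0)
    (us ut : W) (hhol : ut = J us) :
    ω us ut = ω (πξ us) (J (πξ us)) ∧
    ((∀ x ∈ ξ, 0 ≤ ω x (J x)) → 0 ≤ ω us ut) := by
  have hJus : J us = σ us • R + (-lam us) • dr + J (πξ us) := by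
    conv_lhs => rw [hdecomp us]
    rw [map_add, map_add, map_smul, map_smul, hJdr, hJR, smul_neg, neg_smul]
  have hformula : ω us ut = ω (πξ us) (J (πξ us)) :=
    calc ω us ut = ω (πξ us) (J us) := by
          rw [hhol]
          nth_rw 1 [hdecomp us]
          exact ω.apply_smul_add_smul_add_of_left_eq_zero hωdr hωR _ _ _ _
      _ = ω (πξ us) (J (πξ us)) := by
          rw [hJus, ω.apply_smul_add_smul_add_of_right_eq_zero
            (ω.apply_eq_zero_of_skew_of_left hanti hωR) (ω.apply_eq_zero_of_skew_of_left hanti hωdr)]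
  exact ⟨hformula, fun hpos => hformula ▸ hpos _ (hπmem us)⟩

/-- pointwise formula for the pullback ũ*ω on a J-holomorphic map,
and its nonnegativity when ω is J-nonnegative on ξ. -/
theorem stmt6 (W : Type*) [AddCommGroup W] [Module ℝ W]
    (dr R : W) (ξ : Submodule ℝ W) (J : W →ₗ[ℝ] W)
    (σ lam : W →ₗ[ℝ] ℝ) (πξ : W →ₗ[ℝ] W)
    (ω : W →ₗ[ℝ] W →ₗ[ℝ] ℝ)
    (hdecomp : ∀ x, x = σ x • dr + lam x • R + πξ x) (hπmem : ∀ x, πξ x ∈ ξ)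
    (hJdr : J dr = R) (hJR : J R = -dr) (hJξ : ∀ x ∈ ξ, J x ∈ ξ)
    (hanti : ∀ x y, ω x y = - ω y x)
    (hωdr : ∀ y, ω dr y = 0) (hωR : ∀ y, ω R y = 0)
    (us ut : W) (hhol : ut = J us) :
    ω us ut = ω (πξ us) (J (πξ us)) ∧
    ((∀ x ∈ ξ, 0 ≤ ω x (J x)) → 0 ≤ ω us ut) :=
  stmt6_general W dr R ξ J σ lam πξ ω hdecomp hπmem hJdr hJR hanti hωdr hωR us ut hhol
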